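/- arXiv:2303.11362 — 7 statements merged into one kernel-verified Lean document; each statement's English description precedes it below -/
import Mathlib

section
/- Let V be a finite-dimensional complex vector space with a symmetric bilinear form B. Let u₁, u₂ ∈ V be nonzero isotropic vectors and W₁ ⊆ u₁^⊥, W₂ ⊆ u₂^⊥ linear subspaces. Suppose 𝔥 ⊆ End(V) is a Lie subalgebra (with respect to the commutator bracket) containing T_{u₁,w} for every w ∈ W₁ and T_{u₂,w} for every w ∈ W₂. If there exists v ∈ W₁ ∩ W₂ with B(v,v) ≠ 0, then T_{u₁,u₂} ∈ 𝔥. -/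
/-- For a symmetric bilinear form `B` on `V` and vectors `a b : V`, the endomorphism
`x ↦ B(x,b)•a − B(x,a)•b`, which corresponds to `a ∧ b ∈ Λ²V ≅ so(V,B)`. -/
noncomputable def Tmap {K V : Type*} [CommRing K] [AddCommGroup V] [Module K V]
    (B : V →ₗ[K] V →ₗ[K] K) (a b : V) : Module.End K V :=
  (LinearMap.toSpanSingleton K V a).comp (B.flip b) -
    (LinearMap.toSpanSingleton K V b).comp (B.flip a)

attribute [local instance 100] LieRing.ofAssociativeRing

theorem Tmap_self {K V : Type*} [CommRing K] [AddCommGroup V] [Module K V]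
    (B : V →ₗ[K] V →ₗ[K] K) (a : V) : Tmap B a a = 0 :=
  sub_self _

theorem Tmap_lie_Tmap {K V : Type*} [CommRing K] [AddCommGroup V] [Module K V]
    (B : V →ₗ[K] V →ₗ[K] K) (hsymm : ∀ x y : V, B x y = B y x) (a b c d : V) :
    ⁅Tmap B a b, Tmap B c d⁆ =
      B b c • Tmap B a d - B b d • Tmap B a c - B a c • Tmap B b d + B a d • Tmap B b c := by
  ext x
  simp only [Ring.lie_def, LinearMap.sub_apply, LinearMap.add_apply, LinearMap.smul_apply,
    Module.End.mul_apply, Tmap, LinearMap.coe_comp, Function.comp_apply,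
    LinearMap.toSpanSingleton_apply, LinearMap.flip_apply, map_sub, map_smul,
    hsymm c b, hsymm d b, hsymm c a, hsymm d a]
  module

theorem stmt0_general (V : Type*) [AddCommGroup V] [Module ℂ V]
    (B : V →ₗ[ℂ] V →ₗ[ℂ] ℂ) (hsymm : ∀ x y : V, B x y = B y x)
    (u₁ u₂ : V)
    (W₁ W₂ : Submodule ℂ V)
    (hW₁ : ∀ w ∈ W₁, B w u₁ = 0) (hW₂ : ∀ w ∈ W₂, B w u₂ = 0)
    (𝔥 : LieSubalgebra ℂ (Module.End ℂ V))
    (h₁ : ∀ w ∈ W₁, Tmap B u₁ w ∈ 𝔥) (h₂ : ∀ w ∈ W₂, Tmap B u₂ w ∈ 𝔥)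
    (v : V) (hv₁ : v ∈ W₁) (hv₂ : v ∈ W₂) (hv : B v v ≠ 0) :
    Tmap B u₁ u₂ ∈ 𝔥 := by
  have hbracket : ⁅Tmap B u₁ v, Tmap B u₂ v⁆ = -B v v • Tmap B u₁ u₂ := by
    rw [Tmap_lie_Tmap B hsymm, hW₂ v hv₂, hsymm u₁ v, hW₁ v hv₁, Tmap_self]
    simp only [zero_smul, smul_zero, sub_zero, add_zero, zero_sub, neg_smul]
  have hmem : ⁅Tmap B u₁ v, Tmap B u₂ v⁆ ∈ 𝔥 := 𝔥.lie_mem (h₁ v hv₁) (h₂ v hv₂)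
  rw [hbracket] at hmem
  simpa [hv] using 𝔥.smul_mem (-B v v)⁻¹ hmem

theorem stmt0 (V : Type*) [AddCommGroup V] [Module ℂ V] [FiniteDimensional ℂ V]
    (B : V →ₗ[ℂ] V →ₗ[ℂ] ℂ) (hsymm : ∀ x y : V, B x y = B y x)
    (u₁ u₂ : V) (hu₁ : u₁ ≠ 0) (hu₂ : u₂ ≠ 0)
    (hiso₁ : B u₁ u₁ = 0) (hiso₂ : B u₂ u₂ = 0)
    (W₁ W₂ : Submodule ℂ V)
    (hW₁ : ∀ w ∈ W₁, B w u₁ = 0) (hW₂ : ∀ w ∈ W₂, B w u₂ = 0)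
    (𝔥 : LieSubalgebra ℂ (Module.End ℂ V))
    (h₁ : ∀ w ∈ W₁, Tmap B u₁ w ∈ 𝔥) (h₂ : ∀ w ∈ W₂, Tmap B u₂ w ∈ 𝔥)
    (v : V) (hv₁ : v ∈ W₁) (hv₂ : v ∈ W₂) (hv : B v v ≠ 0) :
    Tmap B u₁ u₂ ∈ 𝔥 :=
  stmt0_general V B hsymm u₁ u₂ W₁ W₂ hW₁ hW₂ 𝔥 h₁ h₂ v hv₁ hv₂ hv
end

section
/- Let V be a complex vector space of dimension d ≥ 5 with a nondegenerate symmetric bilinear form B. Let u₁, u₂ ∈ V be nonzero isotropic vectors, and suppose 𝔥 ⊆ End(V) is a Lie subalgebra (commutator bracket) containing T_{u₁,w} for every w ∈ u₁^⊥ and T_{u₂,w} for every w ∈ u₂^⊥. Then T_{u₁,u₂} ∈ 𝔥. -/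
attribute [local instance 100] LieRing.ofAssociativeRing

/-!
If `w` is orthogonal to both `u₁` and `u₂`, then `⁅T_{u₁,w}, T_{u₂,w}⁆ = -B(w,w) • T_{u₁,u₂}`,
so it suffices to find such a `w` with `B(w,w) ≠ 0`. The common orthogonal complement of `u₁`
and `u₂` has dimension at least `d - 2`, which exceeds `d / 2` once `d ≥ 5`; a subspace that
large cannot be totally isotropic for a nondegenerate form, since it would lie in its own
orthogonal complement.
-/

open Module

theorem Tmap_lie_Tmap_of_orthogonal {K V : Type*} [CommRing K] [AddCommGroup V] [Module K V]
    {B : LinearMap.BilinForm K V} (hB : LinearMap.IsSymm B) {u₁ u₂ w : V} (hw₁ : B u₁ w = 0)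
    (hw₂ : B u₂ w = 0) :
    ⁅Tmap B u₁ w, Tmap B u₂ w⁆ = -B w w • Tmap B u₁ u₂ := by
  ext x
  simp only [Ring.lie_def, Tmap, LinearMap.sub_apply, LinearMap.comp_apply,
    LinearMap.toSpanSingleton_apply, LinearMap.flip_apply, LinearMap.smul_apply,
    Module.End.mul_apply, map_sub, map_smul, smul_sub, smul_smul]
  rw [hB.eq_iff.mp hw₁, hB.eq_iff.mp hw₂, hw₁, hw₂,
    show B u₂ u₁ = B u₁ u₂ from (hB.eq u₁ u₂).symm]
  module

theorem exists_apply_self_ne_zero_of_finrank_lt_two_mul {K V : Type*} [Field K]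
    [Invertible (2 : K)] [AddCommGroup V] [Module K V] [FiniteDimensional K V]
    {B : LinearMap.BilinForm K V} (hB : B.Nondegenerate) (hsymm : LinearMap.IsSymm B)
    {W : Submodule K V} (hW : finrank K V < 2 * finrank K W) : ∃ w ∈ W, B w w ≠ 0 := by
  by_contra! hiso
  have hrestrict : B.restrict W = 0 := by
    by_contra hne
    obtain ⟨x, hx⟩ := LinearMap.BilinForm.exists_bilinForm_self_ne_zero hne (hsymm.domRestrict W)
    exact hx (hiso x x.2)
  have hle : W ≤ B.orthogonal W := fun x hx y hy =>
    LinearMap.congr_fun₂ hrestrict ⟨y, hy⟩ ⟨x, hx⟩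
  have hWW := Submodule.finrank_mono hle
  rw [LinearMap.BilinForm.finrank_orthogonal hB] at hWW
  have hWV := Submodule.finrank_le W
  omega

theorem finrank_span_pair_le {R M : Type*} [Ring R] [StrongRankCondition R] [AddCommGroup M]
    [Module R M] (x y : M) : finrank R (Submodule.span R {x, y}) ≤ 2 := by
  classical
  exact (finrank_span_le_card _).trans (by simpa using Finset.card_insert_le x {y})

theorem stmt1_general (V : Type*) [AddCommGroup V] [Module ℂ V] [FiniteDimensional ℂ V]
    (hd : 5 ≤ Module.finrank ℂ V)
    (B : V →ₗ[ℂ] V →ₗ[ℂ] ℂ) (hsymm : ∀ x y : V, B x y = B y x)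
    (hnd : ∀ x : V, (∀ y : V, B x y = 0) → x = 0)
    (u₁ u₂ : V)
    (𝔥 : LieSubalgebra ℂ (Module.End ℂ V))
    (h₁ : ∀ w : V, B w u₁ = 0 → Tmap B u₁ w ∈ 𝔥)
    (h₂ : ∀ w : V, B w u₂ = 0 → Tmap B u₂ w ∈ 𝔥) :
    Tmap B u₁ u₂ ∈ 𝔥 := by
  have hB : LinearMap.IsSymm B := LinearMap.isSymm_def.mpr hsymm
  have hnondeg : B.Nondegenerate := hB.isRefl.nondegenerate_iff_separatingLeft.mpr hnd
  set W := LinearMap.BilinForm.orthogonal B (Submodule.span ℂ {u₁, u₂})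
  have hW : finrank ℂ V < 2 * finrank ℂ W := by
    have hspan := finrank_span_pair_le (R := ℂ) u₁ u₂
    rw [LinearMap.BilinForm.finrank_orthogonal hnondeg]
    omega
  obtain ⟨w, hwW, hww⟩ := exists_apply_self_ne_zero_of_finrank_lt_two_mul hnondeg hB hW
  have hw₁ : B u₁ w = 0 := hwW u₁ (Submodule.subset_span (by simp))
  have hw₂ : B u₂ w = 0 := hwW u₂ (Submodule.subset_span (by simp))
  have hbracket := 𝔥.lie_mem (h₁ w (hB.eq_iff.mp hw₁)) (h₂ w (hB.eq_iff.mp hw₂))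
  rw [Tmap_lie_Tmap_of_orthogonal hB hw₁ hw₂] at hbracket
  exact (𝔥.toSubmodule.smul_mem_iff (neg_ne_zero.mpr hww)).mp hbracket

theorem stmt1 (V : Type*) [AddCommGroup V] [Module ℂ V] [FiniteDimensional ℂ V]
    (hd : 5 ≤ Module.finrank ℂ V)
    (B : V →ₗ[ℂ] V →ₗ[ℂ] ℂ) (hsymm : ∀ x y : V, B x y = B y x)
    (hnd : ∀ x : V, (∀ y : V, B x y = 0) → x = 0)
    (u₁ u₂ : V) (hu₁ : u₁ ≠ 0) (hu₂ : u₂ ≠ 0)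
    (hiso₁ : B u₁ u₁ = 0) (hiso₂ : B u₂ u₂ = 0)
    (𝔥 : LieSubalgebra ℂ (Module.End ℂ V))
    (h₁ : ∀ w : V, B w u₁ = 0 → Tmap B u₁ w ∈ 𝔥)
    (h₂ : ∀ w : V, B w u₂ = 0 → Tmap B u₂ w ∈ 𝔥) :
    Tmap B u₁ u₂ ∈ 𝔥 :=
  stmt1_general V hd B hsymm hnd u₁ u₂ 𝔥 h₁ h₂
end

section
/- Let V be a complex vector space of dimension d ≥ 7 with a nondegenerate symmetric bilinear form B. For i = 1, 2 let Lᵢ ⊆ V be a one-dimensional subspace and uᵢ a nonzero isotropic vector with uᵢ ∈ Lᵢ^⊥ and uᵢ ∉ Lᵢ (so dim(Lᵢ + ℂuᵢ) = 2), and set Wᵢ = (Lᵢ + ℂuᵢ)^⊥. Suppose 𝔥 ⊆ End(V) is a Lie subalgebra (commutator bracket) containing T_{uᵢ,w} for every w ∈ Wᵢ and both i = 1, 2. Then T_{u₁,u₂} ∈ 𝔥. -/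
attribute [local instance] LieRing.ofAssociativeRing

section Tmap

variable {K V : Type*} [CommRing K] [AddCommGroup V] [Module K V] (B : V →ₗ[K] V →ₗ[K] K)

lemma Tmap_apply (a b x : V) : Tmap B a b x = B x b • a - B x a • b := by
  simp [Tmap, LinearMap.toSpanSingleton_apply]

lemma lie_Tmap_Tmap_of_orthogonal (hsymm : ∀ x y : V, B x y = B y x) {a b w : V}
    (ha : B w a = 0) (hb : B w b = 0) :
    ⁅Tmap B a w, Tmap B b w⁆ = -B w w • Tmap B a b := by
  have ha' : B a w = 0 := (hsymm a w).trans ha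
  have hb' : B b w = 0 := (hsymm b w).trans hb
  ext x
  simp only [Ring.lie_def, LinearMap.sub_apply, Module.End.mul_apply, LinearMap.smul_apply,
    Tmap_apply, map_sub, map_smul, smul_sub, smul_smul, ha, hb, ha', hb', hsymm b a]
  module

end Tmap

namespace LinearMap.BilinForm

open Module Submodule

variable {K V : Type*} [Field K] [AddCommGroup V] [Module K V] {B : LinearMap.BilinForm K V}

lemma le_orthogonal_self_of_forall_apply_self_eq_zero [NeZero (2 : K)]
    (hsymm : ∀ x y : V, B x y = B y x) {S : Submodule K V} (hS : ∀ s ∈ S, B s s = 0) :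
    S ≤ B.orthogonal S := by
  intro t ht s hs
  have hst := hS (s + t) (S.add_mem hs ht)
  simp only [map_add, LinearMap.add_apply, hS s hs, hS t ht, hsymm t s] at hst
  have : (2 : K) * B s t = 0 := by linear_combination hst
  exact (mul_eq_zero.mp this).resolve_left two_ne_zero

lemma sup_span_singleton_le_orthogonal (hB : B.IsRefl) {S : Submodule K V}
    (hS : S ≤ B.orthogonal S) {u : V} (hu : u ∈ B.orthogonal S) (huu : B u u = 0) :
    S ⊔ K ∙ u ≤ B.orthogonal (S ⊔ K ∙ u) := by
  intro x hx y hy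
  obtain ⟨s, hs, _, hx', rfl⟩ := mem_sup.mp hx
  obtain ⟨t, ht, _, hy', rfl⟩ := mem_sup.mp hy
  obtain ⟨a, rfl⟩ := mem_span_singleton.mp hx'
  obtain ⟨c, rfl⟩ := mem_span_singleton.mp hy'
  simp [hS hs t ht, hu t ht, hB _ _ (hu s hs), huu]

lemma two_mul_finrank_le_of_le_orthogonal [FiniteDimensional K V] (hB : B.Nondegenerate)
    {S : Submodule K V} (hS : S ≤ B.orthogonal S) : 2 * finrank K S ≤ finrank K V := by
  have := (finrank_mono hS).trans_eq (finrank_orthogonal hB S)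
  have := S.finrank_le
  omega

lemma mem_of_le_orthogonal_of_finrank_lt [FiniteDimensional K V] (hB : B.Nondegenerate)
    (hB' : B.IsRefl) {S : Submodule K V} (hS : S ≤ B.orthogonal S) {u : V}
    (hu : u ∈ B.orthogonal S) (huu : B u u = 0) (hdim : finrank K V < 2 * (finrank K S + 1)) :
    u ∈ S := by
  by_contra huS
  have := two_mul_finrank_le_of_le_orthogonal hB (sup_span_singleton_le_orthogonal hB' hS hu huu)
  rw [finrank_sup_span_singleton huS] at this
  omega

lemma exists_apply_self_ne_zero_or_mem_orthogonal [NeZero (2 : K)] [FiniteDimensional K V]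
    (hsymm : ∀ x y : V, B x y = B y x) (hB : B.Nondegenerate) {U : Submodule K V}
    (hU : 2 * finrank K U < finrank K V + 2) {u : V} (hu : u ∈ U) (huu : B u u = 0) :
    (∃ w ∈ B.orthogonal U, B w w ≠ 0) ∨ u ∈ B.orthogonal U := by
  have hrefl : B.IsRefl := fun x y h => (hsymm y x).trans h
  by_cases hanis : ∃ w ∈ B.orthogonal U, B w w ≠ 0
  · exact Or.inl hanis
  push Not at hanis
  refine Or.inr (mem_of_le_orthogonal_of_finrank_lt hB hrefl
    (le_orthogonal_self_of_forall_apply_self_eq_zero hsymm hanis)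
    (le_orthogonal_orthogonal hrefl hu) huu ?_)
  have := U.finrank_le
  rw [finrank_orthogonal hB]
  omega

end LinearMap.BilinForm

open Module LinearMap.BilinForm

theorem stmt2_general (V : Type*) [AddCommGroup V] [Module ℂ V] [FiniteDimensional ℂ V]
    (hd : 7 ≤ Module.finrank ℂ V)
    (B : V →ₗ[ℂ] V →ₗ[ℂ] ℂ) (hsymm : ∀ x y : V, B x y = B y x)
    (hnd : ∀ x : V, (∀ y : V, B x y = 0) → x = 0)
    (L₁ L₂ : Submodule ℂ V)
    (hL₁ : Module.finrank ℂ L₁ = 1) (hL₂ : Module.finrank ℂ L₂ = 1)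
    (u₁ u₂ : V)
    (hiso₂ : B u₂ u₂ = 0)
    (𝔥 : LieSubalgebra ℂ (Module.End ℂ V))
    -- `W₁ = (L₁ + ℂu₁)^⊥`: the elements orthogonal to `u₁` and to all of `L₁`
    (h₁ : ∀ w : V, B w u₁ = 0 → (∀ l ∈ L₁, B w l = 0) → Tmap B u₁ w ∈ 𝔥)
    (h₂ : ∀ w : V, B w u₂ = 0 → (∀ l ∈ L₂, B w l = 0) → Tmap B u₂ w ∈ 𝔥) :
    Tmap B u₁ u₂ ∈ 𝔥 := by
  have hrefl : B.IsRefl := fun x y h => (hsymm y x).trans h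
  have hB : B.Nondegenerate := hrefl.nondegenerate_iff_separatingLeft.mpr hnd
  have hU : finrank ℂ (L₁ ⊔ L₂ ⊔ Submodule.span ℂ {u₁, u₂} : Submodule ℂ V) ≤ 4 := by
    have := Submodule.finrank_add_le_finrank_add_finrank L₁ L₂
    have := Submodule.finrank_add_le_finrank_add_finrank (L₁ ⊔ L₂) (Submodule.span ℂ {u₁, u₂})
    have : finrank ℂ (Submodule.span ℂ {u₁, u₂}) ≤ 2 := by
      classical
      exact (finrank_span_le_card _).trans (by simpa using Finset.card_le_two)
    omega
  set U := L₁ ⊔ L₂ ⊔ Submodule.span ℂ {u₁, u₂}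
  set S := orthogonal B U
  have hSU : ∀ w ∈ S, ∀ x ∈ U, B w x = 0 := fun w hw x hx => hrefl _ _ (hw x hx)
  have hu₁U : u₁ ∈ U := Submodule.mem_sup_right (Submodule.subset_span (by simp))
  have hu₂U : u₂ ∈ U := Submodule.mem_sup_right (Submodule.subset_span (by simp))
  have hW₁ : ∀ w ∈ S, Tmap B u₁ w ∈ 𝔥 := fun w hw => h₁ w (hSU w hw u₁ hu₁U) fun l hl =>
    hSU w hw l (Submodule.mem_sup_left (Submodule.mem_sup_left hl))
  have hW₂ : ∀ w ∈ S, Tmap B u₂ w ∈ 𝔥 := fun w hw => h₂ w (hSU w hw u₂ hu₂U) fun l hl =>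
    hSU w hw l (Submodule.mem_sup_left (Submodule.mem_sup_right hl))
  rcases exists_apply_self_ne_zero_or_mem_orthogonal hsymm hB (by omega) hu₂U hiso₂ with
    ⟨w, hw, hww⟩ | hu₂S
  · have := 𝔥.lie_mem (hW₁ w hw) (hW₂ w hw)
    rw [lie_Tmap_Tmap_of_orthogonal B hsymm (hSU w hw u₁ hu₁U) (hSU w hw u₂ hu₂U)] at this
    simpa [smul_smul, hww] using 𝔥.smul_mem (-B w w)⁻¹ this
  · exact hW₁ u₂ hu₂S

theorem stmt2 (V : Type*) [AddCommGroup V] [Module ℂ V] [FiniteDimensional ℂ V]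
    (hd : 7 ≤ Module.finrank ℂ V)
    (B : V →ₗ[ℂ] V →ₗ[ℂ] ℂ) (hsymm : ∀ x y : V, B x y = B y x)
    (hnd : ∀ x : V, (∀ y : V, B x y = 0) → x = 0)
    (L₁ L₂ : Submodule ℂ V)
    (hL₁ : Module.finrank ℂ L₁ = 1) (hL₂ : Module.finrank ℂ L₂ = 1)
    (u₁ u₂ : V) (hu₁ : u₁ ≠ 0) (hu₂ : u₂ ≠ 0)
    (hiso₁ : B u₁ u₁ = 0) (hiso₂ : B u₂ u₂ = 0)
    (hu₁L : ∀ l ∈ L₁, B u₁ l = 0) (hu₂L : ∀ l ∈ L₂, B u₂ l = 0)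
    (hu₁nL : u₁ ∉ L₁) (hu₂nL : u₂ ∉ L₂)
    (𝔥 : LieSubalgebra ℂ (Module.End ℂ V))
    -- `W₁ = (L₁ + ℂu₁)^⊥`: the elements orthogonal to `u₁` and to all of `L₁`
    (h₁ : ∀ w : V, B w u₁ = 0 → (∀ l ∈ L₁, B w l = 0) → Tmap B u₁ w ∈ 𝔥)
    (h₂ : ∀ w : V, B w u₂ = 0 → (∀ l ∈ L₂, B w l = 0) → Tmap B u₂ w ∈ 𝔥) :
    Tmap B u₁ u₂ ∈ 𝔥 :=
  stmt2_general V hd B hsymm hnd L₁ L₂ hL₁ hL₂ u₁ u₂ hiso₂ 𝔥 h₁ h₂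
end

section
/- Let V be a finite-dimensional vector space over ℚ with a nondegenerate symmetric bilinear form q, and let V_ℂ = V ⊗_ℚ ℂ with the ℂ-bilinear extension of q. The group of field automorphisms of ℂ acts on V_ℂ through the second tensor factor. Let u ∈ V_ℂ be a nonzero vector such that no nonzero rational vector (element of V ⊗ 1 ⊆ V_ℂ) is q-orthogonal to u. Then the vectors ξ(u), where ξ ranges over all field automorphisms of ℂ, span V_ℂ over ℂ. -/
open TensorProduct

/-- A field automorphism of `ℂ`, viewed as a `ℚ`-linear map. -/
noncomputable def ratLinearOfRingEquiv (ξ : ℂ ≃+* ℂ) : ℂ →ₗ[ℚ] ℂ where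
  toFun := ξ
  map_add' := map_add ξ
  map_smul' := fun q x => by
    simp [Rat.smul_def, map_mul, map_ratCast]

/-- The action of a field automorphism `ξ` of `ℂ` on `V_ℂ = ℂ ⊗[ℚ] V`
through the first tensor factor. -/
noncomputable def galAction (V : Type*) [AddCommGroup V] [Module ℚ V] (ξ : ℂ ≃+* ℂ) :
    ℂ ⊗[ℚ] V →ₗ[ℚ] ℂ ⊗[ℚ] V :=
  LinearMap.rTensor V (ratLinearOfRingEquiv ξ)

/-!
The span `S` of the conjugates of `u` is stable under `Aut ℂ`, and so is its orthogonal
complement, because the extension of `q` is defined over `ℚ` and hence `Aut ℂ`-equivariant.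
If `S ≠ V_ℂ`, nondegeneracy makes the orthogonal complement nonzero. A nonzero `Aut ℂ`-stable
subspace contains a nonzero fixed vector: in a vector `y` of minimal support with one coordinate
equal to `1`, every `ξ y - y` has smaller support and so vanishes. Since `Aut ℂ` fixes only
rational numbers (algebraic numbers are moved by the Galois group of `ℚ̄ / ℚ`, transcendental
ones by permuting a transcendence basis, and both extend to `ℂ`), a fixed vector is rational,
yet orthogonal to `u`.
-/

open MvPolynomial in
theorem IsTranscendenceBasis.exists_ringEquiv_extend {F K : Type*} [Field F] [Field K]
    [IsAlgClosed K] [Algebra F K] {s : Set K} (hs : IsTranscendenceBasis F ((↑) : s → K))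
    (φ : F ≃+* F) (e : s ≃ s) :
    ∃ ξ : K ≃+* K, (∀ k : F, ξ (algebraMap F K k) = algebraMap F K (φ k)) ∧
      ∀ x : s, ξ x = e x := by
  let M := Algebra.adjoin F (Set.range ((↑) : s → K))
  have : IsAlgClosure M K := IsAlgClosed.isAlgClosure_of_transcendence_basis _ hs
  let ψ : M ≃+* M := hs.1.aevalEquiv.symm.toRingEquiv.trans
    (((renameEquiv F e).toRingEquiv.trans (mapEquiv s φ)).trans hs.1.aevalEquiv.toRingEquiv)
  refine ⟨IsAlgClosure.equivOfEquiv K K ψ, fun k => ?_, fun x => ?_⟩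
  · have hψ : ψ (algebraMap F M k) = algebraMap F M (φ k) := by
      simpa [ψ, ← MvPolynomial.algebraMap_eq] using hs.1.aevalEquiv.commutes (φ k)
    rw [IsScalarTower.algebraMap_apply F M K, IsAlgClosure.equivOfEquiv_algebraMap, hψ,
      ← IsScalarTower.algebraMap_apply]
  · have hx : ∀ y : s, (y : K) = algebraMap M K (hs.1.aevalEquiv (X y)) := fun y => by
      rw [hs.1.algebraMap_aevalEquiv, aeval_X]
    have hψ : ψ (hs.1.aevalEquiv (X x)) = hs.1.aevalEquiv (X (e x)) := by
      simp [ψ]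
    rw [hx, IsAlgClosure.equivOfEquiv_algebraMap, hψ, ← hx]

section FixedField

open Cardinal

variable {K : Type*} [Field K] [CharZero K] [IsAlgClosed K]

theorem IsAlgebraic.exists_ratCast_eq_of_forall_ringEquiv_apply_eq {c : K}
    (hc : IsAlgebraic ℚ c) (h : ∀ ξ : K ≃+* K, ξ c = c) : ∃ r : ℚ, (r : K) = c := by
  let Qbar := algebraicClosure ℚ K
  have : IsAlgClosure ℚ Qbar := algebraicClosure.isAlgClosure ℚ K
  let c' : Qbar := ⟨c, mem_algebraicClosure_iff.mpr hc⟩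
  obtain ⟨s, hs⟩ := exists_isTranscendenceBasis Qbar K
  have hfixed : ∀ σ : Qbar ≃ₐ[ℚ] Qbar, σ c' = c' := fun σ => by
    obtain ⟨ξ, hξ, -⟩ := hs.exists_ringEquiv_extend σ.toRingEquiv (Equiv.refl s)
    exact Subtype.ext ((hξ c').symm.trans (h ξ))
  obtain ⟨r, hr⟩ :=
    IntermediateField.mem_bot.mp ((InfiniteGalois.mem_bot_iff_fixed c').mpr hfixed)
  exact ⟨r, congrArg Subtype.val hr⟩

theorem Transcendental.exists_ringEquiv_apply_ne (hK : ℵ₀ < #K) {c : K}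
    (hc : Transcendental ℚ c) : ∃ ξ : K ≃+* K, ξ c ≠ c := by
  classical
  obtain ⟨s, hcs, hs⟩ := exists_isTranscendenceBasis_superset (R := ℚ) (s := {c})
    (algebraicIndependent_unique_type_iff.mpr hc)
  have hcard : #K = #s := by
    simpa using IsAlgClosed.cardinal_eq_cardinal_transcendence_basis_of_aleph0_lt _ hs
      Cardinal.mkRat.le hK
  have : Nontrivial s := Cardinal.one_lt_iff_nontrivial.mp
    (hcard ▸ one_lt_aleph0.trans hK)
  let c' : s := ⟨c, hcs rfl⟩
  obtain ⟨d, hd⟩ := exists_ne c'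
  obtain ⟨ξ, -, hξ⟩ := hs.exists_ringEquiv_extend (RingEquiv.refl ℚ) (Equiv.swap c' d)
  refine ⟨ξ, fun hfix => hd ?_⟩
  have := hξ c'
  rw [hfix, Equiv.swap_apply_left] at this
  exact Subtype.ext this.symm

theorem exists_ratCast_eq_of_forall_ringEquiv_apply_eq (hK : ℵ₀ < #K) {c : K}
    (h : ∀ ξ : K ≃+* K, ξ c = c) : ∃ r : ℚ, (r : K) = c := by
  by_cases hc : IsAlgebraic ℚ c
  · exact hc.exists_ratCast_eq_of_forall_ringEquiv_apply_eq h
  · obtain ⟨ξ, hξ⟩ := Transcendental.exists_ringEquiv_apply_ne hK hc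
    exact (hξ (h ξ)).elim

end FixedField

namespace LinearMap.BilinForm

variable {K L V : Type*} [Field K] [Field L] [Algebra K L] [AddCommGroup V] [Module K V]

theorem toMatrix_baseChange {ι : Type*} [Fintype ι] [DecidableEq ι] (b : Module.Basis ι K V)
    (B : LinearMap.BilinForm K V) :
    toMatrix (b.baseChange L) (B.baseChange L) = (toMatrix b B).map (algebraMap K L) := by
  ext i j
  simp [Algebra.smul_def]

theorem Nondegenerate.baseChange [FiniteDimensional K V] {B : LinearMap.BilinForm K V}
    (hB : B.Nondegenerate) : (B.baseChange L).Nondegenerate := by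
  let b := Module.finBasis K V
  rw [nondegenerate_iff_det_ne_zero (b.baseChange L), toMatrix_baseChange,
    ← RingHom.mapMatrix_apply, ← RingHom.map_det, map_ne_zero]
  exact (nondegenerate_iff_det_ne_zero b).mp hB

theorem orthogonal_ne_bot [FiniteDimensional K V] {B : LinearMap.BilinForm K V}
    (hB : B.Nondegenerate) {W : Submodule K V} (hW : W ≠ ⊤) : B.orthogonal W ≠ ⊥ := by
  intro h
  have := finrank_orthogonal hB W
  rw [h, finrank_bot] at this
  have := Submodule.finrank_lt hW
  omega

end LinearMap.BilinForm

section GalAction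

variable {V : Type*} [AddCommGroup V] [Module ℚ V]

@[simp]
theorem galAction_tmul (ξ : ℂ ≃+* ℂ) (a : ℂ) (v : V) :
    galAction V ξ (a ⊗ₜ v) = ξ a ⊗ₜ v := rfl

theorem galAction_smul (ξ : ℂ ≃+* ℂ) (a : ℂ) (x : ℂ ⊗[ℚ] V) :
    galAction V ξ (a • x) = ξ a • galAction V ξ x := by
  induction x using TensorProduct.induction_on with
  | zero => simp
  | tmul b v => simp [smul_tmul']
  | add x y hx hy => rw [smul_add, map_add, map_add, hx, hy, smul_add]

theorem galAction_galAction (ξ ζ : ℂ ≃+* ℂ) (x : ℂ ⊗[ℚ] V) :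
    galAction V ξ (galAction V ζ x) = galAction V (ζ.trans ξ) x := by
  induction x using TensorProduct.induction_on with
  | zero => simp
  | tmul a v => rfl
  | add x y hx hy => rw [map_add, map_add, map_add, hx, hy]

@[simp]
theorem galAction_refl (x : ℂ ⊗[ℚ] V) : galAction V (RingEquiv.refl ℂ) x = x := by
  induction x using TensorProduct.induction_on with
  | zero => simp
  | tmul a v => rfl
  | add x y hx hy => rw [map_add, hx, hy]

theorem galAction_symm_apply (ξ : ℂ ≃+* ℂ) (x : ℂ ⊗[ℚ] V) :
    galAction V ξ (galAction V ξ.symm x) = x := by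
  rw [galAction_galAction, RingEquiv.symm_trans_self, galAction_refl]

theorem Module.Basis.baseChange_repr_galAction {ι : Type*} (b : Module.Basis ι ℚ V)
    (ξ : ℂ ≃+* ℂ) (x : ℂ ⊗[ℚ] V) (i : ι) :
    (b.baseChange ℂ).repr (galAction V ξ x) i = ξ ((b.baseChange ℂ).repr x i) := by
  induction x using TensorProduct.induction_on with
  | zero => simp
  | tmul a v => simp [Rat.smul_def]
  | add x y hx hy => simp [hx, hy]

theorem LinearMap.BilinForm.baseChange_galAction (B : LinearMap.BilinForm ℚ V) (ξ : ℂ ≃+* ℂ)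
    (x y : ℂ ⊗[ℚ] V) :
    B.baseChange ℂ (galAction V ξ x) (galAction V ξ y) = ξ (B.baseChange ℂ x y) := by
  induction x using TensorProduct.induction_on with
  | zero => simp
  | tmul a v =>
    induction y using TensorProduct.induction_on with
    | zero => simp
    | tmul b w => simp [map_rat_smul]
    | add y z hy hz => simp only [map_add, hy, hz]
  | add x z hx hz => simp only [map_add, LinearMap.add_apply, hx, hz]

theorem exists_one_tmul_eq_of_forall_galAction_eq {x : ℂ ⊗[ℚ] V}
    (h : ∀ ξ : ℂ ≃+* ℂ, galAction V ξ x = x) : ∃ v : V, (1 : ℂ) ⊗ₜ v = x := by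
  let b := Module.Free.chooseBasis ℚ V
  let bC := b.baseChange ℂ
  have hrat (i) : ∃ r : ℚ, (r : ℂ) = bC.repr x i :=
    exists_ratCast_eq_of_forall_ringEquiv_apply_eq
      (Cardinal.mk_complex ▸ Cardinal.aleph0_lt_continuum) fun ξ => by
        rw [← b.baseChange_repr_galAction, h]
  choose r hr using hrat
  let f : _ →₀ ℚ := Finsupp.ofSupportFinite r <|
    (bC.repr x).support.finite_toSet.subset fun i hi => by simpa [← hr] using hi
  refine ⟨b.repr.symm f, bC.ext_elem fun i => ?_⟩
  simp [bC, f, Finsupp.ofSupportFinite_coe, hr]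

def IsGalStable (W : Submodule ℂ (ℂ ⊗[ℚ] V)) : Prop :=
  ∀ ξ : ℂ ≃+* ℂ, ∀ x ∈ W, galAction V ξ x ∈ W

theorem isGalStable_span_galAction (u : ℂ ⊗[ℚ] V) :
    IsGalStable (Submodule.span ℂ {x : ℂ ⊗[ℚ] V | ∃ ξ : ℂ ≃+* ℂ, x = galAction V ξ u}) := by
  intro ξ x hx
  induction hx using Submodule.span_induction with
  | mem x hx =>
    obtain ⟨ζ, rfl⟩ := hx
    exact Submodule.subset_span ⟨ζ.trans ξ, galAction_galAction ξ ζ u⟩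
  | zero => simp
  | add x y _ _ hx hy => rw [map_add]; exact add_mem hx hy
  | smul a x _ hx => rw [galAction_smul]; exact Submodule.smul_mem _ _ hx

theorem IsGalStable.orthogonal {W : Submodule ℂ (ℂ ⊗[ℚ] V)} (hW : IsGalStable W)
    (B : LinearMap.BilinForm ℚ V) : IsGalStable ((B.baseChange ℂ).orthogonal W) := by
  intro ξ x hx y hy
  have h := B.baseChange_galAction ξ (galAction V ξ.symm y) x
  rw [galAction_symm_apply, hx _ (hW ξ.symm y hy), map_zero] at h
  exact h

theorem support_galAction_sub_subset {ι : Type*} [DecidableEq ι] (b : Module.Basis ι ℚ V)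
    (ξ : ℂ ≃+* ℂ) {x : ℂ ⊗[ℚ] V} {i : ι} (hi : (b.baseChange ℂ).repr x i = 1) :
    ((b.baseChange ℂ).repr (galAction V ξ x - x)).support ⊆
      ((b.baseChange ℂ).repr x).support.erase i := by
  intro j hj
  rw [Finsupp.mem_support_iff, map_sub, Finsupp.sub_apply, b.baseChange_repr_galAction,
    sub_ne_zero] at hj
  refine Finset.mem_erase.mpr ⟨fun hji => hj (by rw [hji, hi, map_one]), ?_⟩
  exact Finsupp.mem_support_iff.mpr fun h0 => hj (by rw [h0, map_zero])

theorem IsGalStable.exists_ne_zero_forall_galAction_eq {W : Submodule ℂ (ℂ ⊗[ℚ] V)}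
    (hW : IsGalStable W) (hW₀ : W ≠ ⊥) :
    ∃ x ∈ W, x ≠ 0 ∧ ∀ ξ : ℂ ≃+* ℂ, galAction V ξ x = x := by
  classical
  let b := Module.Free.chooseBasis ℚ V
  let n : ℂ ⊗[ℚ] V → ℕ := fun x => ((b.baseChange ℂ).repr x).support.card
  obtain ⟨x, ⟨hxW, hx₀⟩, hmin⟩ := (measure n).wf.has_min {x | x ∈ W ∧ x ≠ 0}
    (Submodule.exists_mem_ne_zero_of_ne_bot hW₀)
  obtain ⟨i, hi⟩ : ∃ i, (b.baseChange ℂ).repr x i ≠ 0 := by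
    by_contra! h
    exact hx₀ ((b.baseChange ℂ).repr.map_eq_zero_iff.mp (Finsupp.ext h))
  set y := ((b.baseChange ℂ).repr x i)⁻¹ • x
  have hyW : y ∈ W := W.smul_mem _ hxW
  have hyi : (b.baseChange ℂ).repr y i = 1 := by simp [y, hi]
  have hny : n y = n x := by simp [n, y, Finsupp.support_smul_eq (inv_ne_zero hi)]
  refine ⟨y, hyW, smul_ne_zero (inv_ne_zero hi) hx₀, fun ξ => ?_⟩
  by_contra hξ
  refine hmin (galAction V ξ y - y) ⟨sub_mem (hW ξ y hyW) hyW, sub_ne_zero.mpr hξ⟩ ?_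
  calc n (galAction V ξ y - y) ≤ (((b.baseChange ℂ).repr y).support.erase i).card :=
        Finset.card_le_card (support_galAction_sub_subset b ξ hyi)
    _ < n y := Finset.card_erase_lt_of_mem (Finsupp.mem_support_iff.mpr (hyi ▸ one_ne_zero))
    _ = n x := hny

end GalAction

theorem stmt6_general (V : Type*) [AddCommGroup V] [Module ℚ V] [FiniteDimensional ℚ V]
    (q : V →ₗ[ℚ] V →ₗ[ℚ] ℚ) (hsymm : ∀ x y : V, q x y = q y x)
    (hnd : ∀ x : V, (∀ y : V, q x y = 0) → x = 0)
    -- `qC` is the `ℂ`-bilinear extension of `q` to `V_ℂ = ℂ ⊗[ℚ] V`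
    (qC : (ℂ ⊗[ℚ] V) →ₗ[ℂ] (ℂ ⊗[ℚ] V) →ₗ[ℂ] ℂ)
    (hqC : ∀ (a b : ℂ) (v w : V), qC (a ⊗ₜ v) (b ⊗ₜ w) = a * b * (q v w : ℂ))
    (u : ℂ ⊗[ℚ] V)
    -- no nonzero rational vector is `q`-orthogonal to `u`
    (hirr : ∀ v : V, v ≠ 0 → qC ((1 : ℂ) ⊗ₜ v) u ≠ 0) :
    Submodule.span ℂ {x : ℂ ⊗[ℚ] V | ∃ ξ : ℂ ≃+* ℂ, x = galAction V ξ u} = ⊤ := by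
  have hq : LinearMap.IsSymm q := ⟨hsymm⟩
  obtain rfl : qC = LinearMap.BilinForm.baseChange ℂ q := by
    ext v w
    simp [hqC, Algebra.smul_def, mul_comm]
  have hqℂ : (LinearMap.BilinForm.baseChange ℂ q).Nondegenerate :=
    LinearMap.BilinForm.Nondegenerate.baseChange
      (hq.isRefl.nondegenerate_iff_separatingLeft.mpr hnd)
  by_contra hS
  obtain ⟨x, hx, hx₀, hfix⟩ := ((isGalStable_span_galAction u).orthogonal q)
    |>.exists_ne_zero_forall_galAction_eq (LinearMap.BilinForm.orthogonal_ne_bot hqℂ hS)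
  obtain ⟨v, rfl⟩ := exists_one_tmul_eq_of_forall_galAction_eq hfix
  have hu : u ∈ Submodule.span ℂ {x | ∃ ξ : ℂ ≃+* ℂ, x = galAction V ξ u} :=
    Submodule.subset_span ⟨RingEquiv.refl ℂ, (galAction_refl u).symm⟩
  refine hirr v (by rintro rfl; simp at hx₀) ?_
  exact (LinearMap.BilinForm.IsSymm.baseChange ℂ hq).eq_iff.mp (hx u hu)

theorem stmt6 (V : Type*) [AddCommGroup V] [Module ℚ V] [FiniteDimensional ℚ V]
    (q : V →ₗ[ℚ] V →ₗ[ℚ] ℚ) (hsymm : ∀ x y : V, q x y = q y x)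
    (hnd : ∀ x : V, (∀ y : V, q x y = 0) → x = 0)
    -- `qC` is the `ℂ`-bilinear extension of `q` to `V_ℂ = ℂ ⊗[ℚ] V`
    (qC : (ℂ ⊗[ℚ] V) →ₗ[ℂ] (ℂ ⊗[ℚ] V) →ₗ[ℂ] ℂ)
    (hqC : ∀ (a b : ℂ) (v w : V), qC (a ⊗ₜ v) (b ⊗ₜ w) = a * b * (q v w : ℂ))
    (u : ℂ ⊗[ℚ] V) (hu : u ≠ 0)
    -- no nonzero rational vector is `q`-orthogonal to `u`
    (hirr : ∀ v : V, v ≠ 0 → qC ((1 : ℂ) ⊗ₜ v) u ≠ 0) :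
    Submodule.span ℂ {x : ℂ ⊗[ℚ] V | ∃ ξ : ℂ ≃+* ℂ, x = galAction V ξ u} = ⊤ :=
  stmt6_general V q hsymm hnd qC hqC u hirr
end

section
/- Let H be a real vector space of dimension d + 1 with d ≥ 1, and let q be a nondegenerate symmetric bilinear form on H of signature (1, d). Let A ⊆ H be a closed discrete subset for which there exists a constant M > 0 with q(x,x) ≥ −M for all x ∈ A. Then for every h ∈ H with q(h,h) > 0 there exists an open neighbourhood U of h in H such that U ∩ x^⊥ ≠ ∅ for only finitely many x ∈ A; that is, the collection of hyperplanes x^⊥, x ∈ A, is locally finite in the positive cone of H. -/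
/-!
Write `q = a ⊗ a - p` with `a` a linear form and `p` positive semidefinite; in an orthogonal
basis `a` is the positive coordinate scaled by `√q(b₀, b₀)`, so `p(x, x) = a(x)² - q(x, x)` and
`a(x)² + p(x, x) = 2 a(x)² - q(x, x)` is a Euclidean form. If `q(x, y) = 0`, Cauchy–Schwarz for
`p` gives `a(x)² a(y)² ≤ p(x, x) p(y, y)`. On the open neighbourhood `p(y, y) < r a(y)²` of `h`,
with `r < 1`, this yields `a(x)² ≤ r p(x, x)`, and together with `a(x)² - p(x, x) ≥ -M` it bounds
`a(x)² + p(x, x)` by `2M / (1 - r)`. So the relevant `x ∈ A` lie in a bounded set, which a closed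
discrete set meets in finitely many points.
-/

open Bornology Module

theorem Module.Basis.isBounded_setOf_sum_mul_repr_sq_le {ι E : Type*} [Fintype ι]
    [NormedAddCommGroup E] [NormedSpace ℝ E] [FiniteDimensional ℝ E] (b : Basis ι ℝ E)
    {w : ι → ℝ} (hw : ∀ i, 0 < w i) (C : ℝ) :
    IsBounded {x | ∑ i, w i * b.repr x i ^ 2 ≤ C} := by
  refine b.equivFun.toContinuousLinearEquiv.antilipschitz.isBounded_preimage
    (s := {u | ∑ i, w i * u i ^ 2 ≤ C}) ?_
  refine forall_isBounded_image_eval_iff.1 fun i =>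
    (Metric.isBounded_Icc (-√(C / w i)) √(C / w i)).subset ?_
  rintro _ ⟨u, hu, rfl⟩
  have hui : w i * u i ^ 2 ≤ C :=
    (Finset.single_le_sum (fun j _ => mul_nonneg (hw j).le (sq_nonneg (u j)))
      (Finset.mem_univ i)).trans hu
  exact abs_le.1 (Real.abs_le_sqrt ((le_div_iff₀' (hw i)).2 hui))

namespace LinearMap.BilinForm

theorem apply_self_eq_sum_of_isOrthoᵢ {ι R M : Type*} [Fintype ι] [CommRing R] [AddCommGroup M]
    [Module R M] {B : LinearMap.BilinForm R M} (b : Basis ι R M) (hb : B.IsOrthoᵢ b) (x : M) :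
    B x x = ∑ i, B (b i) (b i) * b.repr x i ^ 2 := by
  conv_lhs => rw [← b.sum_repr x]
  simp only [map_sum, map_smul, LinearMap.sum_apply, LinearMap.smul_apply, smul_eq_mul]
  refine Finset.sum_congr rfl fun i _ => ?_
  rw [Finset.sum_eq_single i (fun j _ hji => by rw [hb hji, mul_zero]) (by simp)]
  ring

section
variable {E : Type*} [AddCommGroup E] [Module ℝ E] {q : LinearMap.BilinForm ℝ E} {a : E →ₗ[ℝ] ℝ}

theorem sq_mul_sq_le_of_apply_eq_zero (hq : q.IsSymm) (ha : ∀ x, q x x ≤ a x ^ 2) {x y : E}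
    (hxy : q x y = 0) : a x ^ 2 * a y ^ 2 ≤ (a x ^ 2 - q x x) * (a y ^ 2 - q y y) := by
  have hp : ∀ z, 0 ≤ (linMulLin a a - q) z z := fun z => by
    simpa [sq] using sub_nonneg.2 (ha z)
  have hps : (linMulLin a a - q).IsSymm := ⟨fun x y => by simp [hq.eq x y, mul_comm]⟩
  rw [isSymm_iff] at hps
  simpa [hxy, sq, mul_pow, mul_mul_mul_comm] using apply_sq_le_of_symm _ hp hps x y

theorem sq_le_mul_of_apply_eq_zero (hq : q.IsSymm) (ha : ∀ x, q x x ≤ a x ^ 2) {x y : E}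
    {r : ℝ} (hy : a y ^ 2 - q y y < r * a y ^ 2) (hxy : q x y = 0) :
    a x ^ 2 ≤ r * (a x ^ 2 - q x x) := by
  have hay : 0 < a y ^ 2 := by
    refine (sq_nonneg _).lt_of_ne fun h0 => ?_
    linarith [ha y, h0 ▸ hy]
  refine le_of_mul_le_mul_right ?_ hay
  calc a x ^ 2 * a y ^ 2 ≤ (a x ^ 2 - q x x) * (a y ^ 2 - q y y) :=
        sq_mul_sq_le_of_apply_eq_zero hq ha hxy
    _ ≤ (a x ^ 2 - q x x) * (r * a y ^ 2) :=
        mul_le_mul_of_nonneg_left hy.le (sub_nonneg.2 (ha x))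
    _ = r * (a x ^ 2 - q x x) * a y ^ 2 := by ring

theorem two_mul_sq_sub_le_of_apply_eq_zero (hq : q.IsSymm) (ha : ∀ x, q x x ≤ a x ^ 2)
    {x y : E} {r M : ℝ} (hr : r < 1) (hy : a y ^ 2 - q y y < r * a y ^ 2) (hxy : q x y = 0)
    (hx : -M ≤ q x x) : 2 * a x ^ 2 - q x x ≤ 2 * M / (1 - r) := by
  have hxr := sq_le_mul_of_apply_eq_zero hq ha hy hxy
  have hpx := sub_nonneg.2 (ha x)
  rw [le_div_iff₀ (sub_pos.2 hr)]
  nlinarith [mul_nonneg (sub_nonneg.2 hr.le) hpx]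

end

variable {E : Type*} [NormedAddCommGroup E] [NormedSpace ℝ E] [FiniteDimensional ℝ E]
  {q : LinearMap.BilinForm ℝ E} {a : E →ₗ[ℝ] ℝ}

theorem exists_isOpen_forall_apply_eq_zero_le (hq : q.IsSymm) (ha : ∀ x, q x x ≤ a x ^ 2)
    {h : E} (hh : 0 < q h h) (M : ℝ) :
    ∃ U : Set E, IsOpen U ∧ h ∈ U ∧ ∃ C : ℝ,
      ∀ y ∈ U, ∀ x, q x y = 0 → -M ≤ q x x → 2 * a x ^ 2 - q x x ≤ C := by
  have hah : 0 < a h ^ 2 := hh.trans_le (ha h)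
  obtain ⟨r, hhr, hr⟩ := exists_between ((div_lt_one hah).2 (sub_lt_self _ hh))
  have hcont : Continuous fun y => a y ^ 2 - q y y := by
    have hqc : Continuous fun y => q y y :=
      q.toContinuousBilinearMap.continuous₂.comp (continuous_id.prodMk continuous_id)
    exact (a.continuous_of_finiteDimensional.pow 2).sub hqc
  refine ⟨{y | a y ^ 2 - q y y < r * a y ^ 2}, isOpen_lt hcont (by fun_prop), ?_, 2 * M / (1 - r),
    fun y hy x hxy hx => two_mul_sq_sub_le_of_apply_eq_zero hq ha hr hy hxy hx⟩
  exact (div_lt_iff₀ hah).1 hhr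

theorem finite_setOf_apply_eq_zero (hq : q.IsSymm) (ha : ∀ x, q x x ≤ a x ^ 2)
    (hbdd : ∀ C, IsBounded {x | 2 * a x ^ 2 - q x x ≤ C}) {A : Set E} (hAc : IsClosed A)
    (hAd : DiscreteTopology A) {M : ℝ} (hqA : ∀ x ∈ A, -M ≤ q x x) {h : E} (hh : 0 < q h h) :
    ∃ U : Set E, IsOpen U ∧ h ∈ U ∧ {x ∈ A | ∃ y ∈ U, q x y = 0}.Finite := by
  obtain ⟨U, hU, hhU, C, hC⟩ := exists_isOpen_forall_apply_eq_zero_le hq ha hh M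
  refine ⟨U, hU, hhU, (Metric.finite_isBounded_inter_isClosed
    (isDiscrete_iff_discreteTopology.2 hAd) (hbdd C) hAc).subset ?_⟩
  rintro x ⟨hxA, y, hyU, hxy⟩
  exact ⟨hC y hyU x hxy (hqA x hxA), hxA⟩

theorem exists_forall_apply_self_le_sq {n : ℕ} (b : Basis (Fin (n + 1)) ℝ E) (hb : q.IsOrthoᵢ b)
    (h0 : 0 < q (b 0) (b 0)) (hneg : ∀ i, i ≠ 0 → q (b i) (b i) < 0) :
    ∃ a : E →ₗ[ℝ] ℝ, (∀ x, q x x ≤ a x ^ 2) ∧ ∀ C, IsBounded {x | 2 * a x ^ 2 - q x x ≤ C} := by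
  have hc : ∀ j : Fin n, q (b j.succ) (b j.succ) < 0 := fun j => hneg _ (Fin.succ_ne_zero j)
  set a := √(q (b 0) (b 0)) • b.coord 0
  have hax : ∀ x, a x ^ 2 = q (b 0) (b 0) * b.repr x 0 ^ 2 := fun x => by
    simp only [a, LinearMap.smul_apply, Basis.coord_apply, smul_eq_mul, mul_pow,
      Real.sq_sqrt h0.le]
  have hqx : ∀ x, q x x = q (b 0) (b 0) * b.repr x 0 ^ 2 +
      ∑ j : Fin n, q (b j.succ) (b j.succ) * b.repr x j.succ ^ 2 := fun x => by
    rw [apply_self_eq_sum_of_isOrthoᵢ b hb, Fin.sum_univ_succ]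
  refine ⟨a, fun x => ?_, fun C => ?_⟩
  · rw [hqx, hax, add_le_iff_nonpos_right]
    exact Finset.sum_nonpos fun j _ => mul_nonpos_of_nonpos_of_nonneg (hc j).le (sq_nonneg _)
  · convert b.isBounded_setOf_sum_mul_repr_sq_le (w := fun i => |q (b i) (b i)|)
      (fun i => abs_pos.2 (if hi : i = 0 then hi ▸ h0.ne' else (hneg i hi).ne)) C using 4 with x
    rw [Fin.sum_univ_succ, hqx, hax, abs_of_pos h0]
    simp only [abs_of_neg (hc _), neg_mul, Finset.sum_neg_distrib]
    ring

end LinearMap.BilinForm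

theorem stmt7_general (H : Type*) [NormedAddCommGroup H] [NormedSpace ℝ H]
    (d : ℕ)
    (q : H →ₗ[ℝ] H →ₗ[ℝ] ℝ) (hsymm : ∀ x y : H, q x y = q y x)
    -- `q` has signature `(1, d)`: there is an orthogonal basis with one vector of
    -- positive square and `d` vectors of negative square
    (hsig : ∃ b : Module.Basis (Fin (d + 1)) ℝ H,
      (∀ i j, i ≠ j → q (b i) (b j) = 0) ∧
      0 < q (b 0) (b 0) ∧ ∀ i, i ≠ 0 → q (b i) (b i) < 0)
    (A : Set H) (hAclosed : IsClosed A) (hAdisc : DiscreteTopology A)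
    (M : ℝ) (hqA : ∀ x ∈ A, -M ≤ q x x) :
    ∀ h : H, 0 < q h h → ∃ U : Set H, IsOpen U ∧ h ∈ U ∧
      {x ∈ A | ∃ y ∈ U, q x y = 0}.Finite := by
  obtain ⟨b, horth, h0, hneg⟩ := hsig
  have : FiniteDimensional ℝ H := .of_basis b
  obtain ⟨a, ha, hbdd⟩ :=
    LinearMap.BilinForm.exists_forall_apply_self_le_sq b (fun i j hij => horth i j hij) h0 hneg
  exact fun h hh =>
    LinearMap.BilinForm.finite_setOf_apply_eq_zero ⟨hsymm⟩ ha hbdd hAclosed hAdisc hqA hh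

theorem stmt7 (H : Type*) [NormedAddCommGroup H] [NormedSpace ℝ H]
    (d : ℕ) (hd : 1 ≤ d) (hdim : Module.finrank ℝ H = d + 1)
    (q : H →ₗ[ℝ] H →ₗ[ℝ] ℝ) (hsymm : ∀ x y : H, q x y = q y x)
    (hnd : ∀ x : H, (∀ y : H, q x y = 0) → x = 0)
    -- `q` has signature `(1, d)`: there is an orthogonal basis with one vector of
    -- positive square and `d` vectors of negative square
    (hsig : ∃ b : Module.Basis (Fin (d + 1)) ℝ H,
      (∀ i j, i ≠ j → q (b i) (b j) = 0) ∧
      0 < q (b 0) (b 0) ∧ ∀ i, i ≠ 0 → q (b i) (b i) < 0)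
    (A : Set H) (hAclosed : IsClosed A) (hAdisc : DiscreteTopology A)
    (M : ℝ) (hM : 0 < M) (hqA : ∀ x ∈ A, -M ≤ q x x) :
    ∀ h : H, 0 < q h h → ∃ U : Set H, IsOpen U ∧ h ∈ U ∧
      {x ∈ A | ∃ y ∈ U, q x y = 0}.Finite :=
  stmt7_general H d q hsymm hsig A hAclosed hAdisc M hqA
end

section
/- Let H be a real vector space of dimension d + 1 with d ≥ 1, and let q be a nondegenerate symmetric bilinear form on H of signature (1, d). Let A ⊆ H be a closed discrete subset for which there exists a constant M > 0 with q(x,x) ≥ −M for all x ∈ A, and assume moreover that there is a proper linear subspace H₀ ⊊ H with A ⊆ H₀. Let u ∈ H \ H₀ satisfy q(u,u) = 0. Then there exists an open neighbourhood U of u in H such that U ∩ x^⊥ ≠ ∅ for only finitely many x ∈ A. -/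
/-!
In an orthogonal basis with one positive and `d` negative squares, a vector `y` with
`q y y ≥ 0` that is orthogonal to a nonzero isotropic `u` is a multiple of `u`. As `u ∉ H₀`, the
continuous function `max |q z u| (-q z z)` is positive on the unit sphere of `H₀`, hence at
least some `δ > 0` there. So an `x ∈ H₀` with `q x x ≥ -M` and `|q x u| ≤ (δ / 2) ‖x‖` satisfies
`δ ‖x‖² ≤ M`. If `q x y = 0` with `y` close to `u`, then `|q x u| = |q x (u - y)|` is small
compared with `‖x‖`, so all such `x ∈ A` lie in a ball, which meets the closed discrete set `A`
in finitely many points.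
-/

open Set

namespace LinearMap

section Orthogonal

variable {ι R M : Type*} [Fintype ι] [CommRing R] [AddCommGroup M] [Module R M]
  {q : M →ₗ[R] M →ₗ[R] R} {b : Module.Basis ι R M}

theorem apply_eq_sum_of_isOrthoᵢ (hb : q.IsOrthoᵢ b) (x y : M) :
    q x y = ∑ i, b.repr x i * b.repr y i * q (b i) (b i) := by
  conv_lhs => rw [← b.sum_repr x, ← b.sum_repr y]
  simp only [map_sum, map_smul, LinearMap.sum_apply, LinearMap.smul_apply, smul_eq_mul]
  refine Finset.sum_congr rfl fun i _ => ?_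
  rw [Finset.sum_eq_single i (fun j _ hji => by rw [hb hji, mul_zero])
    (by simp)]
  ring

theorem apply_comm_of_isOrthoᵢ (hb : q.IsOrthoᵢ b) (x y : M) : q x y = q y x := by
  rw [apply_eq_sum_of_isOrthoᵢ hb x y, apply_eq_sum_of_isOrthoᵢ hb y x]
  exact Finset.sum_congr rfl fun i _ => by ring

end Orthogonal

section Lorentzian

variable {ι R M : Type*} [Fintype ι] [Field R] [LinearOrder R] [IsStrictOrderedRing R]
  [AddCommGroup M] [Module R M] {q : M →ₗ[R] M →ₗ[R] R} {b : Module.Basis ι R M} {i₀ : ι}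

theorem eq_zero_of_repr_eq_zero_of_nonneg (hb : q.IsOrthoᵢ b)
    (hneg : ∀ i, i ≠ i₀ → q (b i) (b i) < 0) {w : M} (hw₀ : b.repr w i₀ = 0)
    (hww : 0 ≤ q w w) : w = 0 := by
  have hterm_le : ∀ i ∈ Finset.univ, b.repr w i * b.repr w i * q (b i) (b i) ≤ 0 := by
    intro i _
    rcases eq_or_ne i i₀ with rfl | hi
    · simp [hw₀]
    · exact mul_nonpos_of_nonneg_of_nonpos (mul_self_nonneg _) (hneg i hi).le
  have hsum : ∑ i, b.repr w i * b.repr w i * q (b i) (b i) = 0 :=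
    le_antisymm (Finset.sum_nonpos hterm_le) (apply_eq_sum_of_isOrthoᵢ hb w w ▸ hww)
  have hterm := (Finset.sum_eq_zero_iff_of_nonpos hterm_le).mp hsum
  refine b.repr.map_eq_zero_iff.mp (Finsupp.ext fun i => ?_)
  rcases eq_or_ne i i₀ with rfl | hi
  · exact hw₀
  · exact mul_self_eq_zero.mp
      ((mul_eq_zero.mp (hterm i (Finset.mem_univ i))).resolve_right (hneg i hi).ne)

theorem exists_smul_eq_of_apply_eq_zero_of_nonneg (hb : q.IsOrthoᵢ b)
    (hneg : ∀ i, i ≠ i₀ → q (b i) (b i) < 0) {u y : M} (hu : u ≠ 0) (huu : q u u = 0)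
    (hyu : q y u = 0) (hyy : 0 ≤ q y y) : ∃ t : R, t • u = y := by
  have hu₀ : b.repr u i₀ ≠ 0 := fun h => hu (eq_zero_of_repr_eq_zero_of_nonneg hb hneg h huu.ge)
  set t := b.repr y i₀ / b.repr u i₀
  have huy : q u y = 0 := apply_comm_of_isOrthoᵢ hb u y ▸ hyu
  refine ⟨t, (sub_eq_zero.mp (eq_zero_of_repr_eq_zero_of_nonneg hb hneg ?_ ?_)).symm⟩
  · simp [t, div_mul_cancel₀ _ hu₀]
  · simpa [huu, hyu, huy] using hyy

end Lorentzian

end LinearMap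

theorem IsCompact.exists_pos_forall_le {X : Type*} [TopologicalSpace X] {K : Set X}
    {f : X → ℝ} (hK : IsCompact K) (hf : ContinuousOn f K) (hpos : ∀ x ∈ K, 0 < f x) :
    ∃ δ > 0, ∀ x ∈ K, δ ≤ f x := by
  rcases K.eq_empty_or_nonempty with rfl | hne
  · exact ⟨1, one_pos, by simp⟩
  obtain ⟨x₀, hx₀, hmin⟩ := hK.exists_isMinOn hne hf
  exact ⟨f x₀, hpos x₀ hx₀, hmin⟩

theorem LinearMap.exists_norm_le_of_abs_apply_le_mul_norm {H : Type*} [NormedAddCommGroup H]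
    [NormedSpace ℝ H] [FiniteDimensional ℝ H] (q : H →ₗ[ℝ] H →ₗ[ℝ] ℝ)
    (V : Submodule ℝ H) (u : H) (M : ℝ) (hV : ∀ z ∈ V, q z u = 0 → 0 ≤ q z z → z = 0) :
    ∃ ε > 0, ∃ R, ∀ x ∈ V, -M ≤ q x x → |q x u| ≤ ε * ‖x‖ → ‖x‖ ≤ R := by
  set K := (V : Set H) ∩ Metric.sphere 0 1
  have hK : IsCompact K := (isCompact_sphere 0 1).inter_left V.closed_of_finiteDimensional
  have hcont : Continuous fun z => max |q z u| (-q z z) :=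
    show Continuous fun z => max |q.toContinuousBilinearMap z u| (-q.toContinuousBilinearMap z z)
      by fun_prop
  have hpos : ∀ z ∈ K, 0 < max |q z u| (-q z z) := by
    rintro z ⟨hzV, hz⟩
    by_contra! h
    have hz0 : z = 0 := hV z hzV (abs_nonpos_iff.mp (max_le_iff.mp h).1)
      (neg_nonpos.mp (max_le_iff.mp h).2)
    simp [hz0] at hz
  obtain ⟨δ, hδ, hδK⟩ := hK.exists_pos_forall_le hcont.continuousOn hpos
  refine ⟨δ / 2, half_pos hδ, √(M / δ), fun x hxV hxx hxu => ?_⟩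
  rcases eq_or_ne x 0 with rfl | hx
  · simp
  set n := ‖x‖
  have hn : 0 < n := norm_pos_iff.mpr hx
  set z := n⁻¹ • x
  have hxz : x = n • z := (smul_inv_smul₀ hn.ne' x).symm
  have hzK : z ∈ K := ⟨V.smul_mem _ hxV, by simp [z, norm_smul, n, hn.ne']⟩
  rw [hxz] at hxx hxu
  simp only [map_smul, LinearMap.smul_apply, smul_eq_mul, abs_mul, abs_of_pos hn] at hxx hxu
  have hzu : |q z u| < δ := by nlinarith
  have hzz : δ ≤ -q z z := (le_max_iff.mp (hδK z hzK)).resolve_left hzu.not_ge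
  refine le_trans (le_abs_self n) (Real.abs_le_sqrt ?_)
  rw [le_div_iff₀ hδ]
  nlinarith

theorem stmt8_general (H : Type*) [NormedAddCommGroup H] [NormedSpace ℝ H]
    (d : ℕ)
    (q : H →ₗ[ℝ] H →ₗ[ℝ] ℝ)
    -- `q` has signature `(1, d)`: there is an orthogonal basis with one vector of
    -- positive square and `d` vectors of negative square
    (hsig : ∃ b : Module.Basis (Fin (d + 1)) ℝ H,
      (∀ i j, i ≠ j → q (b i) (b j) = 0) ∧
      0 < q (b 0) (b 0) ∧ ∀ i, i ≠ 0 → q (b i) (b i) < 0)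
    (A : Set H) (hAclosed : IsClosed A) (hAdisc : DiscreteTopology A)
    (M : ℝ) (hqA : ∀ x ∈ A, -M ≤ q x x)
    (H₀ : Submodule ℝ H) (hAH₀ : A ⊆ (H₀ : Set H))
    (u : H) (hu : u ∉ H₀) (hiso : q u u = 0) :
    ∃ U : Set H, IsOpen U ∧ u ∈ U ∧ {x ∈ A | ∃ y ∈ U, q x y = 0}.Finite := by
  obtain ⟨b, horth, -, hneg⟩ := hsig
  have : FiniteDimensional ℝ H := b.finiteDimensional_of_finite
  have hu0 : u ≠ 0 := fun h => hu (h ▸ H₀.zero_mem)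
  have hH₀u : ∀ z ∈ H₀, q z u = 0 → 0 ≤ q z z → z = 0 := by
    intro z hz hzu hzz
    obtain ⟨t, rfl⟩ := q.exists_smul_eq_of_apply_eq_zero_of_nonneg horth hneg hu0 hiso hzu hzz
    by_contra ht
    exact hu ((H₀.smul_mem_iff (left_ne_zero_of_smul ht)).mp hz)
  obtain ⟨ε, hε, R, hR⟩ := q.exists_norm_le_of_abs_apply_le_mul_norm H₀ u M hH₀u
  set Q := q.flip.toContinuousBilinearMap
  refine ⟨Q ⁻¹' Metric.ball (Q u) ε, Metric.isOpen_ball.preimage Q.continuous,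
    Metric.mem_ball_self hε, ?_⟩
  refine ((isCompact_closedBall 0 R).inter_left hAclosed).finite
    (IsDiscrete.mono ⟨hAdisc⟩ inter_subset_left) |>.subset ?_
  rintro x ⟨hxA, y, hy, hxy⟩
  refine ⟨hxA, mem_closedBall_zero_iff.mpr (hR x (hAH₀ hxA) (hqA x hxA) ?_)⟩
  calc |q x u| = ‖(Q u - Q y) x‖ := by simp [Q, hxy]
    _ ≤ ‖Q u - Q y‖ * ‖x‖ := (Q u - Q y).le_opNorm x
    _ ≤ ε * ‖x‖ := by
      gcongr
      rw [← dist_eq_norm, dist_comm]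
      exact hy.le

theorem stmt8 (H : Type*) [NormedAddCommGroup H] [NormedSpace ℝ H]
    (d : ℕ) (hd : 1 ≤ d) (hdim : Module.finrank ℝ H = d + 1)
    (q : H →ₗ[ℝ] H →ₗ[ℝ] ℝ) (hsymm : ∀ x y : H, q x y = q y x)
    (hnd : ∀ x : H, (∀ y : H, q x y = 0) → x = 0)
    -- `q` has signature `(1, d)`: there is an orthogonal basis with one vector of
    -- positive square and `d` vectors of negative square
    (hsig : ∃ b : Module.Basis (Fin (d + 1)) ℝ H,
      (∀ i j, i ≠ j → q (b i) (b j) = 0) ∧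
      0 < q (b 0) (b 0) ∧ ∀ i, i ≠ 0 → q (b i) (b i) < 0)
    (A : Set H) (hAclosed : IsClosed A) (hAdisc : DiscreteTopology A)
    (M : ℝ) (hM : 0 < M) (hqA : ∀ x ∈ A, -M ≤ q x x)
    (H₀ : Submodule ℝ H) (hH₀ : H₀ ≠ ⊤) (hAH₀ : A ⊆ (H₀ : Set H))
    (u : H) (hu : u ∉ H₀) (hiso : q u u = 0) :
    ∃ U : Set H, IsOpen U ∧ u ∈ U ∧ {x ∈ A | ∃ y ∈ U, q x y = 0}.Finite :=
  stmt8_general H d q hsig A hAclosed hAdisc M hqA H₀ hAH₀ u hu hiso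
end

section
/- Let H be a finite-dimensional real vector space with a nondegenerate symmetric bilinear form q of signature (1, n) with n ≥ 1. Let h ∈ H satisfy q(h,h) > 0 and let v ∈ H be such that h and v are linearly independent. Then there exists a ∈ ℝ such that q(h + a v, h + a v) = 0; moreover h + a v ≠ 0 for every such a. -/
/-!
If `q h h > 0`, then `q` is negative definite on the orthogonal complement of `h`: the form is
negative definite on the kernel of the first coordinate of the orthogonal basis, and a vector
`x ⊥ h` with `q x x ≥ 0` could be corrected by a multiple of `h` into a nonzero vector of that
kernel with nonnegative square. Applied to the component of `v` orthogonal to `h`, this gives the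
reverse Cauchy–Schwarz inequality `q h h * q v v < q h v ^ 2`, i.e. the quadratic polynomial
`a ↦ q (h + a • v) (h + a • v)` has positive discriminant, hence a real root.
-/

section

variable {H : Type*} [AddCommGroup H] [Module ℝ H] (q : H →ₗ[ℝ] H →ₗ[ℝ] ℝ)

lemma apply_add_smul_self_of_symm (hsymm : ∀ x y, q x y = q y x) (h v : H) (a : ℝ) :
    q (h + a • v) (h + a • v) = q h h + 2 * q h v * a + q v v * a ^ 2 := by
  simp only [map_add, map_smul, LinearMap.add_apply, LinearMap.smul_apply, smul_eq_mul,
    hsymm v h]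
  ring

lemma Module.Basis.apply_self_eq_sum_of_orthogonal {ι : Type*} [Fintype ι]
    (b : Module.Basis ι ℝ H) (horth : ∀ i j, i ≠ j → q (b i) (b j) = 0) (u : H) :
    q u u = ∑ i, b.repr u i ^ 2 * q (b i) (b i) := by
  conv_lhs => rw [← b.sum_repr u]
  simp only [map_sum, LinearMap.sum_apply, map_smul, LinearMap.smul_apply, smul_eq_mul]
  refine Finset.sum_congr rfl fun i _ => ?_
  rw [Finset.sum_eq_single i (fun j _ hji => by rw [horth j i hji, mul_zero]) (by simp)]
  ring

lemma Module.Basis.apply_self_neg_of_coord_eq_zero {ι : Type*} [Fintype ι]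
    (b : Module.Basis ι ℝ H) (i₀ : ι) (horth : ∀ i j, i ≠ j → q (b i) (b j) = 0)
    (hneg : ∀ i, i ≠ i₀ → q (b i) (b i) < 0) {u : H} (hu : b.coord i₀ u = 0)
    (hu0 : u ≠ 0) : q u u < 0 := by
  obtain ⟨i, hi⟩ : ∃ i, b.repr u i ≠ 0 := by
    by_contra! hzero
    exact hu0 (b.repr.injective (Finsupp.ext fun i => by simp [hzero i]))
  have hii₀ : i ≠ i₀ := by rintro rfl; exact hi hu
  rw [b.apply_self_eq_sum_of_orthogonal q horth, ← neg_pos, ← Finset.sum_neg_distrib]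
  refine Finset.sum_pos' (fun j _ => ?_) ⟨i, Finset.mem_univ i, ?_⟩
  · rcases eq_or_ne j i₀ with rfl | hj
    · simp [← Basis.coord_apply, hu]
    · exact neg_nonneg.mpr (mul_nonpos_of_nonneg_of_nonpos (sq_nonneg _) (hneg j hj).le)
  · exact neg_pos.mpr (mul_neg_of_pos_of_neg (sq_pos_of_ne_zero hi) (hneg i hii₀))

variable {q}

lemma apply_self_neg_of_orthogonal_of_pos (hsymm : ∀ x y, q x y = q y x) (φ : H →ₗ[ℝ] ℝ)
    (hφ : ∀ u, φ u = 0 → u ≠ 0 → q u u < 0) {h x : H} (hh : 0 < q h h) (hx : q h x = 0)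
    (hx0 : x ≠ 0) : q x x < 0 := by
  have hφh : φ h ≠ 0 := fun hφh => (hφ h hφh (by rintro rfl; simp at hh)).not_gt hh
  set u := φ h • x - φ x • h
  have hφu : φ u = 0 := by simp only [u, map_sub, map_smul, smul_eq_mul]; ring
  have hu0 : u ≠ 0 := by
    intro hu
    have hqhu : q h u = -(φ x * q h h) := by simp [u, hx]
    have hφx : φ x = 0 := by
      rw [hu, map_zero, eq_comm, neg_eq_zero] at hqhu
      exact (mul_eq_zero.mp hqhu).resolve_right hh.ne'
    simp [u, hφx, hφh, hx0] at hu
  have hquu : q u u = φ h ^ 2 * q x x + φ x ^ 2 * q h h := by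
    simp only [u, map_sub, map_smul, LinearMap.sub_apply, LinearMap.smul_apply, smul_eq_mul,
      hx, hsymm x h]
    ring
  have huu : q u u < 0 := hφ u hφu hu0
  nlinarith [sq_nonneg (φ x), sq_pos_of_ne_zero hφh]

lemma mul_lt_sq_of_orthogonal_neg (hsymm : ∀ x y, q x y = q y x) {h v : H}
    (hperp : ∀ x, q h x = 0 → x ≠ 0 → q x x < 0) (hh : 0 < q h h)
    (hli : LinearIndependent ℝ ![h, v]) : q h h * q v v < q h v ^ 2 := by
  set w := -q h v • h + q h h • v
  have hw : q h w = 0 := by simp only [w, map_add, map_smul, smul_eq_mul]; ring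
  have hw0 : w ≠ 0 := fun hw0 => hh.ne' (LinearIndependent.pair_iff.mp hli _ _ hw0).2
  have hqww : q w w = q h h * (q h h * q v v - q h v ^ 2) := by
    simp only [w, map_add, map_smul, LinearMap.add_apply, LinearMap.smul_apply, smul_eq_mul,
      hsymm v h]
    ring
  have hww : q w w < 0 := hperp w hw hw0
  rw [hqww] at hww
  nlinarith

end

lemma exists_quadratic_eq_zero_of_mul_lt_sq {A B C : ℝ} (hdisc : C * A < B ^ 2) :
    ∃ a, C + 2 * B * a + A * a ^ 2 = 0 := by
  rcases eq_or_ne A 0 with rfl | hA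
  · have hB : B ≠ 0 := by rintro rfl; simp at hdisc
    exact ⟨-C / (2 * B), by field_simp; ring⟩
  · obtain ⟨a, ha⟩ := exists_quadratic_eq_zero (b := 2 * B) (c := C) hA
      ⟨2 * √(B ^ 2 - C * A), by
        rw [discrim]; nlinarith [Real.mul_self_sqrt (sub_nonneg.mpr hdisc.le)]⟩
    exact ⟨a, by linear_combination ha⟩

theorem stmt11_general (H : Type*) [AddCommGroup H] [Module ℝ H]
    (n : ℕ)
    (q : H →ₗ[ℝ] H →ₗ[ℝ] ℝ) (hsymm : ∀ x y : H, q x y = q y x)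
    -- `q` has signature `(1, n)`: there is an orthogonal basis with one vector of
    -- positive square and `n` vectors of negative square
    (hsig : ∃ b : Module.Basis (Fin (n + 1)) ℝ H,
      (∀ i j, i ≠ j → q (b i) (b j) = 0) ∧
      0 < q (b 0) (b 0) ∧ ∀ i, i ≠ 0 → q (b i) (b i) < 0)
    (h v : H) (hh : 0 < q h h) (hli : LinearIndependent ℝ ![h, v]) :
    (∃ a : ℝ, q (h + a • v) (h + a • v) = 0) ∧
    ∀ a : ℝ, q (h + a • v) (h + a • v) = 0 → h + a • v ≠ 0 := by
  obtain ⟨b, horth, -, hneg⟩ := hsig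
  have hperp : ∀ x, q h x = 0 → x ≠ 0 → q x x < 0 := fun x =>
    apply_self_neg_of_orthogonal_of_pos hsymm (b.coord 0)
      (fun _ => b.apply_self_neg_of_coord_eq_zero q 0 horth hneg) hh
  refine ⟨?_, fun a _ hzero => ?_⟩
  · simpa only [apply_add_smul_self_of_symm q hsymm] using
      exists_quadratic_eq_zero_of_mul_lt_sq (mul_lt_sq_of_orthogonal_neg hsymm hperp hh hli)
  · simpa using (LinearIndependent.pair_iff.mp hli 1 a (by simpa using hzero)).1

theorem stmt11 (H : Type*) [AddCommGroup H] [Module ℝ H] [FiniteDimensional ℝ H]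
    (n : ℕ) (hn : 1 ≤ n) (hdim : Module.finrank ℝ H = n + 1)
    (q : H →ₗ[ℝ] H →ₗ[ℝ] ℝ) (hsymm : ∀ x y : H, q x y = q y x)
    (hnd : ∀ x : H, (∀ y : H, q x y = 0) → x = 0)
    -- `q` has signature `(1, n)`: there is an orthogonal basis with one vector of
    -- positive square and `n` vectors of negative square
    (hsig : ∃ b : Module.Basis (Fin (n + 1)) ℝ H,
      (∀ i j, i ≠ j → q (b i) (b j) = 0) ∧
      0 < q (b 0) (b 0) ∧ ∀ i, i ≠ 0 → q (b i) (b i) < 0)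
    (h v : H) (hh : 0 < q h h) (hli : LinearIndependent ℝ ![h, v]) :
    (∃ a : ℝ, q (h + a • v) (h + a • v) = 0) ∧
    ∀ a : ℝ, q (h + a • v) (h + a • v) = 0 → h + a • v ≠ 0 :=
  stmt11_general H n q hsymm hsig h v hh hli
end
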